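/- At every point (τ,θ) where z(τ,θ) ≠ 0, one has sinh(ρ)·(ρ_ττ − e^{−2τ}ρ_θθ) = cosh(ρ)·[|z_τ|_D² − e^{−2τ}|z_θ|_D² − ρ_τ² + e^{−2τ}ρ_θ²]. -/

import Mathlib

open Real

/-- Partial derivative with respect to the first (time) variable `τ`,
for complex-valued functions. -/
noncomputable def cdt (f : ℝ → ℝ → ℂ) : ℝ → ℝ → ℂ := fun τ θ => deriv (fun s => f s θ) τ

/-- Partial derivative with respect to the second (spatial) variable `θ`,
for complex-valued functions. -/
noncomputable def cdθ (f : ℝ → ℝ → ℂ) : ℝ → ℝ → ℂ := fun τ θ => deriv (fun x => f τ x) θ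

/-- Partial derivative with respect to the first (time) variable `τ`,
for real-valued functions. -/
noncomputable def rdt (f : ℝ → ℝ → ℝ) : ℝ → ℝ → ℝ := fun τ θ => deriv (fun s => f s θ) τ

/-- Partial derivative with respect to the second (spatial) variable `θ`,
for real-valued functions. -/
noncomputable def rdθ (f : ℝ → ℝ → ℝ) : ℝ → ℝ → ℝ := fun τ θ => deriv (fun x => f τ x) θ

/-- Smoothness of a complex-valued function of two real variables. -/
def SmoothC (f : ℝ → ℝ → ℂ) : Prop := ContDiff ℝ (⊤ : ℕ∞) (Function.uncurry f)

/-- 2π-periodicity in the second (spatial) variable. -/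
def PeriodicC (f : ℝ → ℝ → ℂ) : Prop := ∀ τ θ, f τ (θ + 2 * π) = f τ θ

/-- The map takes values in the open unit disc. -/
def InDisc (f : ℝ → ℝ → ℂ) : Prop := ∀ τ θ, ‖f τ θ‖ < 1

/-- `|w|_D²` with respect to the base point `z τ θ` of the disc model. -/
noncomputable def normD2 (z : ℝ → ℝ → ℂ) (τ θ : ℝ) (w : ℂ) : ℝ :=
  4 * ‖w‖ ^ 2 / (1 - ‖z τ θ‖ ^ 2) ^ 2

/-- The hyperbolic distance `ρ` from the origin to `z τ θ` in the disc model. -/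
noncomputable def rho (z : ℝ → ℝ → ℂ) : ℝ → ℝ → ℝ := fun τ θ =>
  Real.log ((1 + ‖z τ θ‖) / (1 - ‖z τ θ‖))

/-- The function `(z/|z|)·ρ`, viewed as a complex (i.e. ℝ²-valued) function;
in Lean, division by zero gives `0`, which agrees with the extension by `0` at `z = 0`. -/
noncomputable def gfun (z : ℝ → ℝ → ℂ) (τ θ : ℝ) : ℂ :=
  (z τ θ / (‖z τ θ‖ : ℂ)) * (rho z τ θ : ℂ)

/-- The wave map equation in the disc model. -/
def DiscWaveMap (z : ℝ → ℝ → ℂ) : Prop :=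
  ∀ τ θ : ℝ,
    cdt (fun s x => cdt z s x / ((1 - ‖z s x‖ ^ 2 : ℝ) : ℂ) ^ 2) τ θ -
      (Real.exp (-2 * τ) : ℂ) *
        cdθ (fun s x => cdθ z s x / ((1 - ‖z s x‖ ^ 2 : ℝ) : ℂ) ^ 2) τ θ =
    2 * z τ θ *
      ((‖cdt z τ θ‖ ^ 2 - Real.exp (-2 * τ) * ‖cdθ z τ θ‖ ^ 2 : ℝ) : ℂ) /
      ((1 - ‖z τ θ‖ ^ 2 : ℝ) : ℂ) ^ 3

noncomputable def dotc (a b : ℂ) : ℝ := a.re * b.re + a.im * b.im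

lemma hasDerivAt_re' (c : ℝ → ℂ) (p : ℂ) (t : ℝ) (h : HasDerivAt c p t) :
    HasDerivAt (fun s => (c s).re) p.re t :=
  Complex.reCLM.hasFDerivAt.comp_hasDerivAt t h

lemma hasDerivAt_im' (c : ℝ → ℂ) (p : ℂ) (t : ℝ) (h : HasDerivAt c p t) :
    HasDerivAt (fun s => (c s).im) p.im t :=
  Complex.imCLM.hasFDerivAt.comp_hasDerivAt t h

lemma hasDerivAt_normSq (c : ℝ → ℂ) (p : ℂ) (t : ℝ) (h : HasDerivAt c p t) :
    HasDerivAt (fun s => Complex.normSq (c s)) (2 * dotc (c t) p) t := by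
  have hre := hasDerivAt_re' c p t h
  have him := hasDerivAt_im' c p t h
  have := (hre.mul hre).add (him.mul him)
  simp only [Complex.normSq_apply]
  refine this.congr_deriv ?_
  simp [dotc]; ring

lemma hasDerivAt_cabs (c : ℝ → ℂ) (p : ℂ) (t : ℝ) (h : HasDerivAt c p t) (h0 : c t ≠ 0) :
    HasDerivAt (fun s => ‖c s‖) (dotc (c t) p / ‖c t‖) t := by
  have hN := hasDerivAt_normSq c p t h
  have hNne : Complex.normSq (c t) ≠ 0 := by
    simpa [Complex.normSq_eq_zero] using h0
  have hs := (Real.hasDerivAt_sqrt hNne).comp t hN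
  have heq : (fun s => ‖c s‖) = fun s => Real.sqrt (Complex.normSq (c s)) := by
    funext s; exact Complex.norm_def _
  rw [heq]
  refine hs.congr_deriv ?_
  have habs : Real.sqrt (Complex.normSq (c t)) = ‖c t‖ := (Complex.norm_def _).symm
  have hpos : (0:ℝ) < ‖c t‖ := norm_pos_iff.mpr h0
  rw [habs]; field_simp

/-- derivative of ρ along a curve, at points where the curve is nonzero -/
lemma hasDerivAt_rho_curve (c : ℝ → ℂ) (hc : ContDiff ℝ (⊤:ℕ∞) c)
    (hlt : ∀ s, ‖c s‖ < 1) (t : ℝ) (h0 : c t ≠ 0) :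
    HasDerivAt (fun s => Real.log ((1 + ‖c s‖) / (1 - ‖c s‖)))
      (2 * dotc (c t) (deriv c t) / (‖c t‖ * (1 - ‖c t‖ ^ 2))) t := by
  have hd : HasDerivAt c (deriv c t) t := (hc.differentiable (by simp) t).hasDerivAt
  have habs := hasDerivAt_cabs c (deriv c t) t hd h0
  have hr0 : (0:ℝ) < ‖c t‖ := norm_pos_iff.mpr h0
  have hr1 : ‖c t‖ < 1 := hlt t
  have h1p : (1:ℝ) + ‖c t‖ ≠ 0 := by positivity
  have h1m : (1:ℝ) - ‖c t‖ ≠ 0 := by linarith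
  have hlog1 := (habs.const_add 1).log h1p
  have hlog2 := (habs.const_sub 1).log h1m
  have hsum := hlog1.sub hlog2
  have heq : (fun s => Real.log ((1 + ‖c s‖) / (1 - ‖c s‖)))
      = fun s => Real.log (1 + ‖c s‖) - Real.log (1 - ‖c s‖) := by
    funext s
    have h1p' : (1:ℝ) + ‖c s‖ ≠ 0 := by positivity
    have h1m' : (1:ℝ) - ‖c s‖ ≠ 0 := by have := hlt s; linarith
    rw [Real.log_div h1p' h1m']
  rw [heq]
  have h1sq : 1 - ‖c t‖ ^ 2 ≠ 0 := by nlinarith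
  refine hsum.congr_deriv ?_
  field_simp [hr0.ne', h1sq]
  ring

lemma key_a (c : ℝ → ℂ) (hc : ContDiff ℝ (⊤:ℕ∞) c)
    (hlt : ∀ s, ‖c s‖ < 1) (t : ℝ) (h0 : c t ≠ 0) :
    deriv (fun s => Real.log ((1 + ‖c s‖) / (1 - ‖c s‖))) t
      = 2 * dotc (c t) (deriv c t) / (‖c t‖ * (1 - ‖c t‖ ^ 2)) :=
  (hasDerivAt_rho_curve c hc hlt t h0).deriv

lemma key_b (c : ℝ → ℂ) (hc : ContDiff ℝ (⊤:ℕ∞) c)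
    (hlt : ∀ s, ‖c s‖ < 1) (t : ℝ) (h0 : c t ≠ 0) :
    deriv (fun s => deriv (fun s' => Real.log ((1 + ‖c s'‖) / (1 - ‖c s'‖))) s) t
      = (2 * ((‖deriv c t‖)^2 + dotc (c t) (deriv (deriv c) t))
            * ((‖c t‖)^2 * (1 - (‖c t‖)^2))
          - 2 * (dotc (c t) (deriv c t))^2 * (1 - 3 * (‖c t‖)^2))
        / ((‖c t‖)^3 * (1 - (‖c t‖)^2)^2) := by
  have hcont : Continuous c := hc.continuous
  have hne : ∀ᶠ s in nhds t, c s ≠ 0 := hcont.continuousAt.eventually_ne h0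
  -- the derivative function equals F near t
  set F : ℝ → ℝ := fun s => 2 * dotc (c s) (deriv c s) / (‖c s‖ * (1 - ‖c s‖ ^ 2)) with hF
  have hev : (fun s => deriv (fun s' => Real.log ((1 + ‖c s'‖) / (1 - ‖c s'‖))) s)
      =ᶠ[nhds t] F := hne.mono (fun s hs => (hasDerivAt_rho_curve c hc hlt s hs).deriv)
  rw [hev.deriv_eq]
  -- now compute deriv F t
  have hd1 : HasDerivAt c (deriv c t) t := (hc.differentiable (by simp) t).hasDerivAt
  have hc' : ContDiff ℝ (⊤:ℕ∞) (deriv c) := (contDiff_infty_iff_deriv.mp hc).2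
  have hd2 : HasDerivAt (deriv c) (deriv (deriv c) t) t :=
    (hc'.differentiable (by simp) t).hasDerivAt
  set p := deriv c t
  set P := deriv (deriv c) t
  set r := ‖c t‖ with hrdef
  have hr0 : (0:ℝ) < r := norm_pos_iff.mpr h0
  have hr1 : r < 1 := hlt t
  have h1sq : 1 - r^2 ≠ 0 := by nlinarith
  have hw : HasDerivAt (fun s => dotc (c s) (deriv c s)) (dotc p p + dotc (c t) P) t := by
    have hre1 := hasDerivAt_re' c p t hd1
    have him1 := hasDerivAt_im' c p t hd1
    have hre2 := hasDerivAt_re' (deriv c) P t hd2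
    have him2 := hasDerivAt_im' (deriv c) P t hd2
    have := (hre1.mul hre2).add (him1.mul him2)
    refine this.congr_deriv ?_
    simp [dotc]; ring
  have hm : HasDerivAt (fun s => ‖c s‖) (dotc (c t) p / r) t :=
    hasDerivAt_cabs c p t hd1 h0
  have hg : HasDerivAt (fun s => ‖c s‖ * (1 - ‖c s‖ ^ 2))
      ((dotc (c t) p / r) * (1 - r^2) + r * (-(2 * r ^ 1 * (dotc (c t) p / r)))) t := by
    exact hm.mul ((hm.pow 2).const_sub 1)
  have hgne : r * (1 - r^2) ≠ 0 := mul_ne_zero hr0.ne' h1sq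
  have hFd : HasDerivAt F
      ((2 * (dotc p p + dotc (c t) P) * (r * (1 - r^2))
        - 2 * dotc (c t) (deriv c t) * ((dotc (c t) p / r) * (1 - r^2) + r * (-(2 * r ^ 1 * (dotc (c t) p / r)))))
        / (r * (1 - r^2))^2) t := (hw.const_mul 2).div hg hgne
  rw [hFd.deriv]
  have hpp : (‖p‖)^2 = dotc p p := by
    rw [Complex.sq_norm, Complex.normSq_apply]; rfl
  rw [hpp]
  field_simp [hr0.ne']
  ring

lemma key_c (c : ℝ → ℂ) (hc : ContDiff ℝ (⊤:ℕ∞) c)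
    (hlt : ∀ s, ‖c s‖ < 1) (t : ℝ) (h0 : c t ≠ 0) :
    deriv (fun s => deriv c s / ((1 - ‖c s‖ ^ 2 : ℝ) : ℂ) ^ 2) t
      = deriv (deriv c) t / ((1 - (‖c t‖)^2 : ℝ) : ℂ)^2
        + ((4 * dotc (c t) (deriv c t) / (1 - (‖c t‖)^2)^3 : ℝ) : ℂ) * deriv c t := by
  have hd1 : HasDerivAt c (deriv c t) t := (hc.differentiable (by simp) t).hasDerivAt
  have hc' : ContDiff ℝ (⊤:ℕ∞) (deriv c) := (contDiff_infty_iff_deriv.mp hc).2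
  have hd2 : HasDerivAt (deriv c) (deriv (deriv c) t) t :=
    (hc'.differentiable (by simp) t).hasDerivAt
  set p := deriv c t with hpdef
  set P := deriv (deriv c) t
  set r := ‖c t‖ with hrdef
  have hr0 : (0:ℝ) < r := norm_pos_iff.mpr h0
  have hr1 : r < 1 := hlt t
  have h1sq : 1 - r^2 ≠ 0 := by nlinarith
  have hm : HasDerivAt (fun s => ‖c s‖) (dotc (c t) p / r) t :=
    hasDerivAt_cabs c p t hd1 h0
  have hreal : HasDerivAt (fun s => (1 - ‖c s‖ ^ 2 : ℝ))
      (-(2 * r ^ 1 * (dotc (c t) p / r))) t := (hm.pow 2).const_sub 1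
  have hofr : HasDerivAt (fun s => ((1 - ‖c s‖ ^ 2 : ℝ) : ℂ))
      (((-(2 * r ^ 1 * (dotc (c t) p / r)) : ℝ) : ℂ)) t :=
    Complex.ofRealCLM.hasFDerivAt.comp_hasDerivAt t hreal
  have hpow : HasDerivAt (fun s => ((1 - ‖c s‖ ^ 2 : ℝ) : ℂ) ^ 2)
      (2 * ((1 - r^2 : ℝ) : ℂ) * ((-(2 * r ^ 1 * (dotc (c t) p / r)) : ℝ) : ℂ)) t := by
    have h2 := hofr.mul hofr
    refine (h2.congr_deriv ?_).congr_of_eventuallyEq (Filter.Eventually.of_forall fun s => ?_)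
    · push_cast; ring
    · simp only [Pi.mul_apply]; ring
  have hWne : (((1 - r^2 : ℝ)) : ℂ) ^ 2 ≠ 0 := by
    apply pow_ne_zero; exact_mod_cast h1sq
  have hdiv := hd2.div hpow hWne
  rw [show (fun s => deriv c s / ((1 - ‖c s‖ ^ 2 : ℝ) : ℂ) ^ 2) = deriv c / (fun s => ((1 - ‖c s‖ ^ 2 : ℝ) : ℂ) ^ 2) from rfl, hdiv.deriv, ← hrdef, ← hpdef]
  have hrC : ((r:ℝ):ℂ) ≠ 0 := by exact_mod_cast hr0.ne'
  have h1sqC : ((1 - r^2 : ℝ):ℂ) ≠ 0 := by exact_mod_cast h1sq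
  push_cast
  push_cast at h1sqC hrC
  field_simp
  ring

lemma sinh_rho_val (r : ℝ) (hr0 : 0 < r) (hr1 : r < 1) :
    Real.sinh (Real.log ((1 + r) / (1 - r))) = 2 * r / (1 - r^2) := by
  have h1 : (0:ℝ) < (1 + r) / (1 - r) := by
    apply div_pos <;> linarith
  rw [Real.sinh_log h1]
  have h1p : (1:ℝ) + r ≠ 0 := by linarith
  have h1m : (1:ℝ) - r ≠ 0 := by linarith
  have h1sq : 1 - r^2 ≠ 0 := by nlinarith
  field_simp
  ring

lemma cosh_rho_val (r : ℝ) (hr0 : 0 < r) (hr1 : r < 1) :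
    Real.cosh (Real.log ((1 + r) / (1 - r))) = (1 + r^2) / (1 - r^2) := by
  have h1 : (0:ℝ) < (1 + r) / (1 - r) := by
    apply div_pos <;> linarith
  rw [Real.cosh_log h1]
  have h1p : (1:ℝ) + r ≠ 0 := by linarith
  have h1m : (1:ℝ) - r ≠ 0 := by linarith
  have h1sq : 1 - r^2 ≠ 0 := by nlinarith
  field_simp
  ring

lemma final_algebra (r u v S T e pp qq : ℝ) (hr0 : 0 < r) (hr1 : r < 1)
    (hstar : (1 - r^2) * (S - e * T) = 2 * r^2 * (pp - e * qq) - 4 * (u^2 - e * v^2)) :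
    (2 * r / (1 - r^2)) *
      ((2 * (pp + S) * (r^2 * (1 - r^2)) - 2 * u^2 * (1 - 3 * r^2)) / (r^3 * (1 - r^2)^2)
        - e * ((2 * (qq + T) * (r^2 * (1 - r^2)) - 2 * v^2 * (1 - 3 * r^2)) / (r^3 * (1 - r^2)^2)))
    = ((1 + r^2) / (1 - r^2)) *
      (4 * pp / (1 - r^2)^2 - e * (4 * qq / (1 - r^2)^2)
        - (2 * u / (r * (1 - r^2)))^2 + e * (2 * v / (r * (1 - r^2)))^2) := by
  have h1sq : 1 - r^2 ≠ 0 := by nlinarith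
  have hrne : r ≠ 0 := hr0.ne'
  have hS : S = e * T + (2 * r^2 * (pp - e * qq) - 4 * (u^2 - e * v^2)) / (1 - r^2) := by
    field_simp
    linarith [hstar]
  rw [hS]
  field_simp
  ring


/-- The identity (37) of the paper: at points where `z ≠ 0`,
`sinh(ρ)(ρ_ττ - e^{-2τ}ρ_θθ) = cosh(ρ)[|z_τ|_D² - e^{-2τ}|z_θ|_D² - ρ_τ² + e^{-2τ}ρ_θ²]`. -/
theorem stmt_15 (z : ℝ → ℝ → ℂ) (hzs : SmoothC z) (hzp : PeriodicC z)
    (hzD : InDisc z) (hwm : DiscWaveMap z)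
    (τ θ : ℝ) (hz0 : z τ θ ≠ 0) :
    Real.sinh (rho z τ θ) *
        (rdt (rdt (rho z)) τ θ - Real.exp (-2 * τ) * rdθ (rdθ (rho z)) τ θ) =
      Real.cosh (rho z τ θ) *
        (normD2 z τ θ (cdt z τ θ) - Real.exp (-2 * τ) * normD2 z τ θ (cdθ z τ θ) -
          (rdt (rho z) τ θ) ^ 2 + Real.exp (-2 * τ) * (rdθ (rho z) τ θ) ^ 2) := by
  have hcC : ContDiff ℝ (⊤:ℕ∞) (fun s => z s θ) := hzs.comp (contDiff_id.prodMk contDiff_const)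
  have hdC : ContDiff ℝ (⊤:ℕ∞) (fun x => z τ x) := hzs.comp (contDiff_const.prodMk contDiff_id)
  have hltc : ∀ s, ‖(fun s => z s θ) s‖ < 1 := fun s => hzD s θ
  have hltd : ∀ x, ‖(fun x => z τ x) x‖ < 1 := fun x => hzD τ x
  have h0c : (fun s => z s θ) τ ≠ 0 := hz0
  have h0d : (fun x => z τ x) θ ≠ 0 := hz0
  have ha1 := key_a (fun s => z s θ) hcC hltc τ h0c
  have ha2 := key_a (fun x => z τ x) hdC hltd θ h0d
  have hb1 := key_b (fun s => z s θ) hcC hltc τ h0c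
  have hb2 := key_b (fun x => z τ x) hdC hltd θ h0d
  have hc1 := key_c (fun s => z s θ) hcC hltc τ h0c
  have hc2 := key_c (fun x => z τ x) hdC hltd θ h0d
  have hr0 : (0:ℝ) < ‖z τ θ‖ := norm_pos_iff.mpr hz0
  have hr1 : ‖z τ θ‖ < 1 := hzD τ θ
  have h1sq : 1 - ‖z τ θ‖^2 ≠ 0 := by nlinarith
  -- the wave map equation, rewritten
  have hw := hwm τ θ
  simp only [cdt, cdθ] at hw
  rw [hc1, hc2] at hw
  set z0 := z τ θ with hz0def
  set p := deriv (fun s => z s θ) τ with hpdef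
  set q := deriv (fun x => z τ x) θ with hqdef
  set P := deriv (deriv (fun s => z s θ)) τ with hPdef
  set Q := deriv (deriv (fun x => z τ x)) θ with hQdef
  set r := ‖z0‖ with hrdef
  set e := Real.exp (-2 * τ) with hedef
  set u := dotc z0 p with hudef
  set v := dotc z0 q with hvdef
  set S := dotc z0 P with hSdef
  set T := dotc z0 Q with hTdef
  -- clear denominators in hw
  have hWC : ((1 - r^2 : ℝ) : ℂ) ≠ 0 := by exact_mod_cast h1sq
  have hpoly : ((1 - r^2 : ℝ) : ℂ) * (P - (e:ℝ) * Q)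
      = 2 * z0 * ((‖p‖^2 - e * ‖q‖^2 : ℝ) : ℂ)
        - (((4*u : ℝ):ℂ) * p - ((e:ℝ):ℂ) * ((4*v : ℝ):ℂ) * q) := by
    have hWC' : (1 - (r:ℂ)^2) ≠ 0 := by push_cast at hWC; exact hWC
    push_cast at hw ⊢
    field_simp [hWC'] at hw
    linear_combination hw
  -- now extract the real identity hstar
  have hstar : (1 - r^2) * (S - e * T)
      = 2 * r^2 * (‖p‖^2 - e * ‖q‖^2) - 4 * (u^2 - e * v^2) := by
    have h2 := congrArg (fun w : ℂ => z0.re * w.re + z0.im * w.im) hpoly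
    simp only [Complex.mul_re, Complex.mul_im, Complex.add_re, Complex.add_im,
      Complex.sub_re, Complex.sub_im, Complex.ofReal_re, Complex.ofReal_im,
      Complex.re_ofNat, Complex.im_ofNat] at h2
    have hr2 : r^2 = z0.re * z0.re + z0.im * z0.im := by
      rw [hrdef, Complex.sq_norm, Complex.normSq_apply]
    have hpp : ‖p‖ ^ 2 = p.re * p.re + p.im * p.im := by
      rw [Complex.sq_norm, Complex.normSq_apply]
    have hqq : ‖q‖ ^ 2 = q.re * q.re + q.im * q.im := by
      rw [Complex.sq_norm, Complex.normSq_apply]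
    simp only [hudef, hvdef, hSdef, hTdef, dotc, hr2, hpp, hqq] at h2 ⊢
    linear_combination h2
  simp only [rho, rdt, rdθ, normD2, cdt, cdθ]
  rw [hb1, hb2, ha1, ha2]
  rw [← hz0def, ← hrdef]
  rw [sinh_rho_val r hr0 hr1, cosh_rho_val r hr0 hr1]
  exact final_algebra r u v S T e (‖p‖^2) (‖q‖^2) hr0 hr1 hstar
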